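/- Let R be a commutative ring, let m ≥ 1, and let v_0, v_1, …, v_{m+1} be m+2 vectors in R^m. For α ≠ i in {0,…,m+1} define Δ_{α,i} = (−1)^{ε(α,i)} · det(M_{α,i}), where M_{α,i} is the m×m matrix whose columns are the vectors v_s for s ∈ {0,…,m+1}∖{α,i}, taken in increasing order of s, and ε(α,i) = 1 if α < i and 0 otherwise; set Δ_{α,α} = 0. Then for all α, β, γ ∈ {0,…,m+1} and all i, j, k ∈ {0,…,m+1}: Σ_{σ ∈ S_3} sgn(σ) · Δ_{α, w_{σ(1)}} · Δ_{β, w_{σ(2)}} · Δ_{γ, w_{σ(3)}} = 0, where (w_1, w_2, w_3) = (i, j, k) and S_3 is the symmetric group on three letters. -/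

import Mathlib

section Aux

variable {R : Type*} [CommRing R] {m : ℕ}

/-- Basis covector. -/
def ee {n : ℕ} (a : Fin n) : Fin n → R := fun s => if s = a then 1 else 0

/-- Stacked determinant: rows `x`, `y`, then the `m` rows of the transposed family `v`. -/
noncomputable def Dd (v : Fin (m+2) → Fin m → R) (x y : Fin (m+2) → R) : R :=
  Matrix.det (Matrix.of (Fin.cons x (Fin.cons y (fun r s => v s r))))

/-- Syzygy: the alternating combination of deleted-row determinants kills each coordinate. -/
theorem syz (n : ℕ) (w : Fin (n+1) → Fin n → R) (c : Fin n) :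
    ∑ k : Fin (n+1), (-1:R)^(k:ℕ) * w k c *
      Matrix.det (Matrix.of fun i j => w (k.succAbove i) j) = 0 := by
  have h0 : (Matrix.of fun (i : Fin (n+1)) (j : Fin (n+1)) =>
      Fin.cons (w i c) (w i) j).det = 0 := by
    apply Matrix.det_zero_of_column_eq (i := 0) (j := c.succ) (Fin.succ_ne_zero c).symm
    intro i
    simp
  rw [Matrix.det_succ_column_zero] at h0
  rw [← h0]
  refine Finset.sum_congr rfl fun k _ => ?_
  simp only [Matrix.of_apply, Fin.cons_zero, Matrix.submatrix_apply, Fin.cons_succ]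
  rfl

theorem L1 (n : ℕ) (C : Fin n → R) (u : Fin (n+1) → Fin n → R) :
    ∑ k : Fin (n+1), (-1:R)^(k:ℕ) * (∑ c, u k c * C c) *
      Matrix.det (Matrix.of fun i j => u (k.succAbove i) j) = 0 := by
  have h : ∀ k : Fin (n+1), (-1:R)^(k:ℕ) * (∑ c, u k c * C c) *
      Matrix.det (Matrix.of fun i j => u (k.succAbove i) j)
      = ∑ c, C c * ((-1:R)^(k:ℕ) * u k c *
        Matrix.det (Matrix.of fun i j => u (k.succAbove i) j)) := by
    intro k
    rw [Finset.mul_sum, Finset.sum_mul]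
    refine Finset.sum_congr rfl fun c _ => by ring
  simp_rw [h]
  rw [Finset.sum_comm]
  simp_rw [← Finset.mul_sum, syz]
  simp

theorem updateRow_cons (x y t : Fin (m+2) → R) (A : Fin m → Fin (m+2) → R) :
    (Matrix.of (Fin.cons x (Fin.cons y A))).updateRow 1 t
      = Matrix.of (Fin.cons x (Fin.cons t A)) := by
  ext p q
  refine Fin.cases ?_ (fun p' => ?_) p
  · rw [Matrix.updateRow_ne (by simp)]
    simp
  · refine Fin.cases ?_ (fun p'' => ?_) p'
    · rw [show (Fin.succ 0 : Fin (m+2)) = 1 by rfl, Matrix.updateRow_self]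
      simp
    · rw [Matrix.updateRow_ne (Fin.succ_succ_ne_one p'')]
      simp

theorem Dd_expand (v : Fin (m+2) → Fin m → R) (x t : Fin (m+2) → R) :
    Dd v x t = ∑ c, t c * ((-1:R)^(1+(c:ℕ)) *
      Matrix.det ((Matrix.of (Fin.cons x (Fin.cons (0 : Fin (m+2) → R) (fun r s => v s r)))).submatrix
        (Fin.succAbove 1) (Fin.succAbove c))) := by
  have h1 : Dd v x t = Matrix.det ((Matrix.of (Fin.cons x (Fin.cons (0 : Fin (m+2) → R)
      (fun r s => v s r)))).updateRow 1 t) := by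
    rw [updateRow_cons]; rfl
  rw [h1, Matrix.det_succ_row _ 1]
  refine Finset.sum_congr rfl fun c _ => ?_
  have h2 : ((Matrix.of (Fin.cons x (Fin.cons (0 : Fin (m+2) → R) (fun r s => v s r)))).updateRow
      1 t).submatrix (Fin.succAbove 1) (Fin.succAbove c)
      = (Matrix.of (Fin.cons x (Fin.cons (0 : Fin (m+2) → R) (fun r s => v s r)))).submatrix
      (Fin.succAbove 1) (Fin.succAbove c) := by
    ext p q
    simp only [Matrix.submatrix_apply]
    rw [Matrix.updateRow_ne (Fin.succAbove_ne _ _)]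
  rw [h2, Matrix.updateRow_self]
  simp only [Fin.val_one]
  ring

theorem Dd_row (v : Fin (m+2) → Fin m → R) (x : Fin (m+2) → R) (r : Fin m) :
    Dd v x (fun s => v s r) = 0 := by
  apply Matrix.det_zero_of_row_eq (i := Fin.succ 0) (j := Fin.succ (Fin.succ r))
  · simp [Fin.ext_iff]
  · show (Fin.cons x (Fin.cons (fun s => v s r) (fun r s => v s r))
        : Fin (m+2) → Fin (m+2) → R) (Fin.succ 0)
      = (Fin.cons x (Fin.cons (fun s => v s r) (fun r s => v s r))
        : Fin (m+2) → Fin (m+2) → R) (Fin.succ (Fin.succ r))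
    rw [Fin.cons_succ, Fin.cons_succ, Fin.cons_zero, Fin.cons_succ]

/-- Grassmann–Plücker / Pfaffian relation for the stacked determinants. -/
theorem pf (v : Fin (m+2) → Fin m → R) (x y z w : Fin (m+2) → R) :
    Dd v x y * Dd v z w - Dd v x z * Dd v y w + Dd v x w * Dd v y z = 0 := by
  have key := L1 (m+2) (fun c => (-1:R)^(1+(c:ℕ)) *
      Matrix.det ((Matrix.of (Fin.cons x (Fin.cons (0 : Fin (m+2) → R) (fun r s => v s r)))).submatrix
        (Fin.succAbove 1) (Fin.succAbove c)))
    (Fin.cons y (Fin.cons z (Fin.cons w (fun r s => v s r))))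
  simp only [← Dd_expand] at key
  rw [Fin.sum_univ_succ, Fin.sum_univ_succ, Fin.sum_univ_succ] at key
  have h0 : (Matrix.of fun i j => (Fin.cons y (Fin.cons z (Fin.cons w (fun r s => v s r)))
        : Fin (m+3) → Fin (m+2) → R) ((0 : Fin (m+3)).succAbove i) j)
      = Matrix.of (Fin.cons z (Fin.cons w (fun r s => v s r))) := by
    ext i j
    simp [Fin.succAbove_zero]
  have h1 : (Matrix.of fun i j => (Fin.cons y (Fin.cons z (Fin.cons w (fun r s => v s r)))
        : Fin (m+3) → Fin (m+2) → R) ((Fin.succ 0 : Fin (m+3)).succAbove i) j)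
      = Matrix.of (Fin.cons y (Fin.cons w (fun r s => v s r))) := by
    ext i j
    refine Fin.cases ?_ (fun i' => ?_) i
    · simp [Fin.succ_succAbove_zero]
    · simp [Fin.succ_succAbove_succ]
  have h2 : (Matrix.of fun i j => (Fin.cons y (Fin.cons z (Fin.cons w (fun r s => v s r)))
        : Fin (m+3) → Fin (m+2) → R) ((Fin.succ (Fin.succ 0) : Fin (m+3)).succAbove i) j)
      = Matrix.of (Fin.cons y (Fin.cons z (fun r s => v s r))) := by
    ext i j
    simp only [Matrix.of_apply]
    refine Fin.cases ?_ (fun i' => ?_) i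
    · rw [Fin.succ_succAbove_zero]
      simp
    · rw [Fin.succ_succAbove_succ]
      refine Fin.cases ?_ (fun i'' => ?_) i'
      · rw [Fin.succ_succAbove_zero]
        simp
      · rw [Fin.succ_succAbove_succ, Fin.succAbove_zero]
        simp
  rw [h0, h1, h2] at key
  have htail : ∀ r : Fin m, Dd v x ((Fin.cons y (Fin.cons z (Fin.cons w (fun r s => v s r)))
      : Fin (m+3) → Fin (m+2) → R) (Fin.succ (Fin.succ (Fin.succ r)))) = 0 := by
    intro r
    simp only [Fin.cons_succ]
    exact Dd_row v x r
  simp only [htail, mul_zero, zero_mul, Finset.sum_const_zero, add_zero] at key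
  simp only [Fin.cons_zero, Fin.cons_succ, Fin.val_zero, pow_zero, one_mul, Fin.val_succ,
    pow_one, pow_add] at key
  show Dd v x y * Matrix.det (Matrix.of (Fin.cons z (Fin.cons w (fun r s => v s r))))
    - Dd v x z * Matrix.det (Matrix.of (Fin.cons y (Fin.cons w (fun r s => v s r))))
    + Dd v x w * Matrix.det (Matrix.of (Fin.cons y (Fin.cons z (fun r s => v s r)))) = 0
  linear_combination key

theorem Dd_ee (v : Fin (m+2) → Fin m → R) (a b : Fin (m+2))
    (b' : Fin (m+1)) (hb' : a.succAbove b' = b) :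
    Dd v (ee a) (ee b) = (-1:R)^((a:ℕ)+(b':ℕ)) *
      Matrix.det (Matrix.of fun r c : Fin m => v (a.succAbove (b'.succAbove c)) r) := by
  rw [Dd, Matrix.det_succ_row_zero]
  rw [Fintype.sum_eq_single a (fun j hj => by
    simp only [Matrix.of_apply, Fin.cons_zero, ee, if_neg hj, mul_zero, zero_mul])]
  simp only [Matrix.of_apply, Fin.cons_zero, ee, if_pos rfl, mul_one]
  rw [Matrix.det_succ_row_zero]
  rw [Fintype.sum_eq_single b' (fun j hj => by
    have : a.succAbove j ≠ b := by
      rw [← hb']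
      exact fun h => hj (Fin.succAbove_right_injective h)
    simp only [Matrix.submatrix_apply, Matrix.of_apply, Fin.cons_succ, Fin.cons_zero, ee,
      if_neg this, mul_zero, zero_mul])]
  simp only [Matrix.submatrix_apply, Matrix.of_apply, Fin.cons_succ, Fin.cons_zero, ee,
    if_pos hb', mul_one, Matrix.submatrix_submatrix]
  have hM : ((Matrix.of (Fin.cons (ee a) (Fin.cons (ee b) (fun r s => v s r)))
        : Matrix (Fin (m+2)) (Fin (m+2)) R).submatrix (Fin.succ ∘ Fin.succ)
        (a.succAbove ∘ b'.succAbove))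
      = Matrix.of fun r c : Fin m => v (a.succAbove (b'.succAbove c)) r := by
    ext r c
    simp only [Matrix.submatrix_apply, Matrix.of_apply, Function.comp_apply, Fin.cons_succ]
  rw [hM, pow_add]
  simp only [if_true]
  ring

end Aux

/-- For `α ≠ i` in `{0,…,m+1}`, the signed determinant
`Δ_{α,i} = (−1)^{ε(α,i)} det(M_{α,i})`, where the columns of `M_{α,i}` are the
vectors `v s` for `s ∈ {0,…,m+1} ∖ {α,i}` taken in increasing order of `s`
(via `Finset.orderIsoOfFin`), and `ε(α,i) = 1` if `α < i` and `0` otherwise;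
`Δ_{α,α} = 0`. -/
noncomputable def deltaPair {R : Type*} [CommRing R] {m : ℕ}
    (v : Fin (m + 2) → Fin m → R) (α i : Fin (m + 2)) : R :=
  if h : α = i then 0
  else
    (if α < i then (-1 : R) else 1) *
      Matrix.det (Matrix.of fun r c : Fin m =>
        v ((({α, i} : Finset (Fin (m + 2)))ᶜ).orderIsoOfFin
            (by rw [Finset.card_compl, Finset.card_pair h]; simp) c) r)

section Aux2

variable {R : Type*} [CommRing R] {m : ℕ}

theorem delta_eq (v : Fin (m+2) → Fin m → R) (a b : Fin (m+2)) :
    deltaPair v a b = (-1:R)^((a:ℕ)+(b:ℕ)) * Dd v (ee a) (ee b) := by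
  rcases eq_or_ne a b with rfl | hab
  · rw [deltaPair, dif_pos rfl]
    have h0 : Dd v (ee a) (ee a) = 0 := by
      apply Matrix.det_zero_of_row_eq (M := Matrix.of (Fin.cons (ee a) (Fin.cons (ee a)
        (fun r s => v s r)))) (i := 0) (j := Fin.succ 0)
      · simp [Fin.ext_iff]
      · show (Fin.cons (ee a) (Fin.cons (ee a) (fun r s => v s r))
            : Fin (m+2) → Fin (m+2) → R) 0
          = (Fin.cons (ee a) (Fin.cons (ee a) (fun r s => v s r))
            : Fin (m+2) → Fin (m+2) → R) (Fin.succ 0)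
        rw [Fin.cons_zero, Fin.cons_succ, Fin.cons_zero]
    rw [h0, mul_zero]
  · obtain ⟨b', hb'⟩ := Fin.exists_succAbove_eq hab.symm
    rw [deltaPair, dif_neg hab, Dd_ee v a b b' hb']
    have hcard : (({a, b} : Finset (Fin (m + 2)))ᶜ).card = m := by
      rw [Finset.card_compl, Finset.card_pair hab]; simp
    have hmono : StrictMono (fun c : Fin m => a.succAbove (b'.succAbove c)) :=
      (Fin.strictMono_succAbove a).comp (Fin.strictMono_succAbove b')
    have hmem : ∀ c : Fin m, a.succAbove (b'.succAbove c) ∈ ({a, b} : Finset (Fin (m + 2)))ᶜ := by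
      intro c
      simp only [Finset.mem_compl, Finset.mem_insert, Finset.mem_singleton, not_or]
      refine ⟨Fin.succAbove_ne a _, ?_⟩
      rw [← hb']
      exact fun h => Fin.succAbove_ne b' c (Fin.succAbove_right_injective h)
    have hemb := Finset.orderEmbOfFin_unique hcard hmem hmono
    have hidx : ∀ c : Fin m, ((({a, b} : Finset (Fin (m + 2)))ᶜ).orderIsoOfFin hcard c
        : Fin (m + 2)) = a.succAbove (b'.succAbove c) := by
      intro c
      rw [Finset.coe_orderIsoOfFin_apply, ← hemb]
    have hdet : Matrix.det (Matrix.of fun r c : Fin m =>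
          v ((({a, b} : Finset (Fin (m + 2)))ᶜ).orderIsoOfFin hcard c) r)
        = Matrix.det (Matrix.of fun r c : Fin m => v (a.succAbove (b'.succAbove c)) r) := by
      congr 1
      ext r c
      rw [Matrix.of_apply, Matrix.of_apply, hidx]
    rw [hdet]
    have hsign : (if a < b then (-1:R) else 1) = (-1:R)^((a:ℕ)+(b:ℕ)) * (-1:R)^((a:ℕ)+(b':ℕ)) := by
      rcases lt_or_ge (Fin.castSucc b') a with hlt | hle
      · have hb : b = Fin.castSucc b' := by rw [← hb', Fin.succAbove_of_castSucc_lt _ _ hlt]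
        have hval : (b:ℕ) = (b':ℕ) := by rw [hb]; simp
        have hnlt : ¬ a < b := by
          rw [hb]; exact not_lt.mpr hlt.le
        rw [if_neg hnlt, hval, ← pow_add]
        have : Even ((a:ℕ) + (b':ℕ) + ((a:ℕ) + (b':ℕ))) := ⟨(a:ℕ)+(b':ℕ), rfl⟩
        exact (Even.neg_one_pow this).symm
      · have hb : b = Fin.succ b' := by rw [← hb', Fin.succAbove_of_le_castSucc _ _ hle]
        have hval : (b:ℕ) = (b':ℕ) + 1 := by rw [hb]; simp
        have halt : a < b := lt_of_le_of_lt hle (hb ▸ Fin.castSucc_lt_succ (i := b'))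
        rw [if_pos halt, hval, ← pow_add]
        have : Odd ((a:ℕ) + ((b':ℕ)+1) + ((a:ℕ) + (b':ℕ))) := ⟨(a:ℕ)+(b':ℕ), by ring⟩
        exact (Odd.neg_one_pow this).symm
    rw [hsign, mul_assoc]

end Aux2

theorem alternating_sum_of_deltaPair_products
    {R : Type*} [CommRing R] (m : ℕ) (hm : 1 ≤ m)
    (v : Fin (m + 2) → Fin m → R) (α β γ i j k : Fin (m + 2)) :
    ∑ σ : Equiv.Perm (Fin 3),
      ((Equiv.Perm.sign σ : ℤ) : R) *
        (deltaPair v α (![i, j, k] (σ 0)) *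
          (deltaPair v β (![i, j, k] (σ 1)) * deltaPair v γ (![i, j, k] (σ 2)))) = 0 := by
  have hm' : Matrix.det (Matrix.of fun p q : Fin 3 =>
        deltaPair v (![α, β, γ] q) (![i, j, k] p))
      = ∑ σ : Equiv.Perm (Fin 3),
        ((Equiv.Perm.sign σ : ℤ) : R) *
          (deltaPair v α (![i, j, k] (σ 0)) *
            (deltaPair v β (![i, j, k] (σ 1)) * deltaPair v γ (![i, j, k] (σ 2)))) := by
    rw [Matrix.det_apply']
    refine Finset.sum_congr rfl fun σ _ => ?_
    rw [Fin.prod_univ_three]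
    simp only [Matrix.of_apply, Matrix.cons_val_zero, Matrix.cons_val_one, Matrix.head_cons,
      Matrix.cons_val_two, Matrix.tail_cons]
    ring
  rw [← hm', Matrix.det_fin_three]
  simp only [Matrix.of_apply, Matrix.cons_val_zero, Matrix.cons_val_one, Matrix.head_cons,
    Matrix.cons_val_two, Matrix.tail_cons]
  simp only [delta_eq]
  linear_combination ((-1:R)^((α:ℕ)+(β:ℕ)+(γ:ℕ)+(i:ℕ)+(j:ℕ)+(k:ℕ))) *
    ( -(Dd v (ee α) (ee i)) * pf v (ee β) (ee γ) (ee j) (ee k)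
      + Dd v (ee α) (ee j) * pf v (ee β) (ee γ) (ee i) (ee k)
      - Dd v (ee α) (ee k) * pf v (ee β) (ee γ) (ee i) (ee j)
      + Dd v (ee β) (ee γ) * pf v (ee α) (ee i) (ee j) (ee k))
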